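/- Let P* = P₁ ∘ P₂ be an optimal (minimum-cost) s–t' secluded path in a graph of maximum degree Δ, partitioned so that |P₁| ≥ Δ + 2, and let σ be the (Δ+2)-vertex suffix of P₁. Then Δ(P₂, P₁) = Δ(P₂, σ), i.e., no vertex of N[P₂] lies in N[P₁ minus its suffix] outside N[σ]. -/

import Mathlib

open Finset

/-- The closed neighborhood of a set `S` of vertices. -/
def nbhd {V : Type*} [Fintype V] [DecidableEq V] (G : SimpleGraph V) [DecidableRel G.Adj]
    (S : Finset V) : Finset V :=
  S ∪ univ.filter (fun v => ∃ u ∈ S, G.Adj u v)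

/-- The exposure cost of a walk. -/
def wcost {V : Type*} [Fintype V] [DecidableEq V] (G : SimpleGraph V) [DecidableRel G.Adj]
    {s t : V} (p : G.Walk s t) : ℕ :=
  (nbhd G p.support.toFinset).card

/-!
Suppose `v ∈ N[P₂] ∩ N[P₁]` but `v ∉ N[σ]`. Then `v` is equal or adjacent to a vertex `y` of `P₁`
lying before `σ` and to a vertex `x` of `P₂` lying after the last vertex of `P₁`. On a
shortcut-free path, equal or adjacent vertices sit at consecutive positions, so `v` is off the
path and `y – v – x` is a detour. The `Δ` inner vertices of `σ` are neither on nor adjacent to the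
rerouted path, while the only vertices it can newly expose are neighbours of `v` other than `y`,
at most `Δ - 1` of them. The rerouted path is therefore strictly cheaper, contradicting optimality.
-/

section Nbhd

variable {V : Type*} [Fintype V] [DecidableEq V] {G : SimpleGraph V} [DecidableRel G.Adj]

lemma mem_nbhd_singleton {u v : V} : v ∈ nbhd G {u} ↔ u = v ∨ G.Adj u v := by
  simp [nbhd, eq_comm]

lemma mem_nbhd_singleton_comm {u v : V} : v ∈ nbhd G {u} ↔ u ∈ nbhd G {v} := by
  simp only [mem_nbhd_singleton, G.adj_comm, eq_comm]

lemma mem_nbhd {S : Finset V} {v : V} : v ∈ nbhd G S ↔ ∃ u ∈ S, v ∈ nbhd G {u} := by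
  simp only [nbhd, mem_union, mem_filter, mem_univ, true_and, mem_singleton]
  grind

lemma subset_nbhd (S : Finset V) : S ⊆ nbhd G S := subset_union_left

lemma nbhd_mono {S T : Finset V} (h : S ⊆ T) : nbhd G S ⊆ nbhd G T := fun _ hv =>
  let ⟨u, hu, huv⟩ := mem_nbhd.mp hv
  mem_nbhd.mpr ⟨u, h hu, huv⟩

end Nbhd

lemma card_lt_of_subset_sdiff_union_erase {α : Type*} [DecidableEq α] {Q O W N : Finset α}
    {y : α} (hQ : Q ⊆ O \ W ∪ N.erase y) (hWO : W ⊆ O) (hy : y ∈ N) (hNW : N.card ≤ W.card) :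
    Q.card < O.card := by
  have hQcard := card_le_card hQ
  have hunion := card_union_le (O \ W) (N.erase y)
  rw [card_sdiff_of_subset hWO, card_erase_of_mem hy] at hunion
  have hWcard := card_le_card hWO
  have hNpos := card_pos.mpr ⟨y, hy⟩
  omega

namespace SimpleGraph.Walk

variable {V : Type*} {G : SimpleGraph V}

def ShortcutFree {u v : V} (p : G.Walk u v) : Prop :=
  ∀ a b, a ∈ p.support → b ∈ p.support → G.Adj a b → p.toSubgraph.Adj a b

lemma ShortcutFree.le_add_one_of_adj {u v : V} {p : G.Walk u v} (hsf : p.ShortcutFree)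
    (hp : p.IsPath) {i j : ℕ} (hi : i ≤ p.length) (hj : j ≤ p.length)
    (h : G.Adj (p.getVert i) (p.getVert j)) : j ≤ i + 1 := by
  obtain ⟨k, hk, hklt⟩ := (toSubgraph_adj_iff p).mp
    (hsf _ _ (p.getVert_mem_support i) (p.getVert_mem_support j) h)
  have hinj {a b : ℕ} (ha : a ≤ p.length) (hb : b ≤ p.length)
      (hab : p.getVert a = p.getVert b) : a = b := hp.getVert_injOn ha hb hab
  rcases Sym2.eq_iff.mp hk with ⟨hki, hkj⟩ | ⟨hkj, hki⟩
  all_goals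
    have := hinj (by omega) hi hki
    have := hinj (by omega) hj hkj
    omega

section Append

variable {u v w : V} (p : G.Walk u v) (q : G.Walk v w)

lemma exists_getVert_append_of_mem_support_left {x : V} (hx : x ∈ p.support) :
    ∃ i ≤ p.length, (p.append q).getVert i = x := by
  obtain ⟨i, rfl, hi⟩ := mem_support_iff_exists_getVert.mp hx
  exact ⟨i, hi, by simp [getVert_append', hi]⟩

lemma exists_getVert_append_of_mem_support_right {x : V} (hx : x ∈ q.support) :
    ∃ j, p.length ≤ j ∧ j ≤ (p.append q).length ∧ (p.append q).getVert j = x := by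
  obtain ⟨j, rfl, hj⟩ := mem_support_iff_exists_getVert.mp hx
  exact ⟨p.length + j, by omega, by simp [hj], by simp [getVert_append]⟩

lemma getVert_append_mem_support_drop {L k : ℕ} (hLk : L ≤ k) (hk : k ≤ p.length) :
    (p.append q).getVert k ∈ p.support.drop L := by
  rw [getVert_append', if_pos hk, getVert_eq_support_getElem p hk]
  have := p.length_support
  exact List.mem_drop_iff_getElem.mpr ⟨k - L, by omega, by congr 1; omega⟩

end Append

section Detour

variable {s t v : V} (p : G.Walk s t) {i j : ℕ} (h₁ : G.Adj (p.getVert i) v)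
  (h₂ : G.Adj v (p.getVert j))

def detour : G.Walk s t :=
  (p.take i).append (cons h₁ (cons h₂ (p.drop j)))

variable {p}

lemma support_detour (hj : j ≤ p.length) :
    (p.detour h₁ h₂).support = p.support.take (i + 1) ++ v :: p.support.drop j := by
  simp [detour, support_append, support_take, hj]

lemma isPath_detour (hp : p.IsPath) (hv : v ∉ p.support) (hij : i < j) (hj : j ≤ p.length) :
    (p.detour h₁ h₂).IsPath := by
  rw [isPath_def, support_detour h₁ h₂ hj, List.nodup_middle, List.nodup_cons, List.mem_append]
  refine ⟨fun h => hv (h.elim List.mem_of_mem_take List.mem_of_mem_drop), ?_⟩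
  have hsub : (p.support.take (i + 1) ++ p.support.drop j).Sublist p.support := by
    conv_rhs => rw [← List.take_append_drop (i + 1) p.support]
    exact (List.Sublist.refl _).append (List.drop_sublist_drop_left _ hij)
  exact hsub.nodup hp.support_nodup

lemma exists_getVert_of_mem_support_detour (hj : j ≤ p.length) {u : V}
    (hu : u ∈ (p.detour h₁ h₂).support) :
    u = v ∨ ∃ k ≤ p.length, (k ≤ i ∨ j ≤ k) ∧ p.getVert k = u := by
  have htake {u : V} (hu : u ∈ (p.take i).support) :
      ∃ k ≤ p.length, (k ≤ i ∨ j ≤ k) ∧ p.getVert k = u := by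
    obtain ⟨k, rfl, hk⟩ := mem_support_iff_exists_getVert.mp hu
    simp only [take_length, le_inf_iff] at hk
    exact ⟨k, hk.2, Or.inl hk.1, by simp [hk.1]⟩
  simp only [detour, mem_support_append_iff, support_cons, List.mem_cons] at hu
  rcases hu with hu | rfl | rfl | hu
  · exact Or.inr (htake hu)
  · exact Or.inr (htake (p.take i).end_mem_support)
  · exact Or.inl rfl
  · obtain ⟨k, rfl, hk⟩ := mem_support_iff_exists_getVert.mp hu
    simp only [drop_length] at hk
    exact Or.inr ⟨j + k, by omega, Or.inr (Nat.le_add_right j k), by simp⟩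

end Detour

variable [Fintype V] [DecidableEq V] [DecidableRel G.Adj]

lemma ShortcutFree.le_add_one_of_mem_nbhd {u v : V} {p : G.Walk u v} (hsf : p.ShortcutFree)
    (hp : p.IsPath) {i j : ℕ} (hi : i ≤ p.length) (hj : j ≤ p.length)
    (h : p.getVert j ∈ nbhd G {p.getVert i}) : j ≤ i + 1 := by
  rcases mem_nbhd_singleton.mp h with h | h
  · exact (hp.getVert_injOn hj hi h.symm).le.trans (Nat.le_succ i)
  · exact hsf.le_add_one_of_adj hp hi hj h

lemma ShortcutFree.notMem_support_of_mem_nbhd {u w v : V} {p : G.Walk u w}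
    (hsf : p.ShortcutFree) (hp : p.IsPath) {i j : ℕ} (hij : i + 2 < j) (hj : j ≤ p.length)
    (hvi : v ∈ nbhd G {p.getVert i}) (hvj : v ∈ nbhd G {p.getVert j}) : v ∉ p.support := by
  intro hv
  obtain ⟨k, rfl, hk⟩ := mem_support_iff_exists_getVert.mp hv
  have := hsf.le_add_one_of_mem_nbhd hp (by omega) hk hvi
  have := hsf.le_add_one_of_mem_nbhd hp hk hj (mem_nbhd_singleton_comm.mp hvj)
  omega

lemma ShortcutFree.getVert_notMem_nbhd_support_detour {s t v : V} {p : G.Walk s t} {i j : ℕ}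
    (h₁ : G.Adj (p.getVert i) v) (h₂ : G.Adj v (p.getVert j)) (hsf : p.ShortcutFree)
    (hp : p.IsPath) (hj : j ≤ p.length) {k : ℕ} (hik : i + 1 < k) (hkj : k + 1 < j)
    (hv : v ∉ nbhd G {p.getVert k}) :
    p.getVert k ∉ nbhd G (p.detour h₁ h₂).support.toFinset := by
  intro hk
  obtain ⟨u, hu, hku⟩ := mem_nbhd.mp hk
  rcases exists_getVert_of_mem_support_detour h₁ h₂ hj (List.mem_toFinset.mp hu)
    with rfl | ⟨l, hl, hil, rfl⟩
  · exact hv (mem_nbhd_singleton_comm.mp hku)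
  · have := hsf.le_add_one_of_mem_nbhd hp hl (by omega) hku
    have := hsf.le_add_one_of_mem_nbhd hp (by omega) hl (mem_nbhd_singleton_comm.mp hku)
    omega

theorem ShortcutFree.mem_nbhd_image_getVert_Ico {s t v : V} {p : G.Walk s t}
    (hsf : p.ShortcutFree) (hp : p.IsPath)
    (hopt : ∀ q : G.Walk s t, q.IsPath → wcost G p ≤ wcost G q)
    {i a j : ℕ} (hia : i + 1 < a) (haj : a + G.maxDegree < j) (hj : j ≤ p.length)
    (hvi : v ∈ nbhd G {p.getVert i}) (hvj : v ∈ nbhd G {p.getVert j}) :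
    v ∈ nbhd G ((Ico a (a + G.maxDegree)).image p.getVert) := by
  by_contra hvW
  set W := (Ico a (a + G.maxDegree)).image p.getVert
  set O := nbhd G p.support.toFinset
  have hvp : v ∉ p.support := hsf.notMem_support_of_mem_nbhd hp (by omega) hj hvi hvj
  have hne {k : ℕ} : p.getVert k ≠ v := fun h => hvp (h ▸ p.getVert_mem_support k)
  have h₁ : G.Adj (p.getVert i) v := (mem_nbhd_singleton.mp hvi).resolve_left hne
  have h₂ : G.Adj v (p.getVert j) := ((mem_nbhd_singleton.mp hvj).resolve_left hne).symm
  have hpO {k : ℕ} : p.getVert k ∈ O :=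
    subset_nbhd _ (List.mem_toFinset.mpr (p.getVert_mem_support k))
  have hWO : W ⊆ O := image_subset_iff.mpr fun _ _ => hpO
  have hWcard : W.card = G.maxDegree := by
    rw [card_image_of_injOn (hp.getVert_injOn.mono fun k hk => by simp at hk; simp; omega),
      Nat.card_Ico, Nat.add_sub_cancel_left]
  have hcover : nbhd G (p.detour h₁ h₂).support.toFinset ⊆
      O \ W ∪ (G.neighborFinset v).erase (p.getVert i) := by
    intro z hz
    have hzW : z ∉ W := fun hzW => by
      obtain ⟨k, hk, rfl⟩ := mem_image.mp hzW
      have := mem_Ico.mp hk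
      exact hsf.getVert_notMem_nbhd_support_detour h₁ h₂ hp hj (by omega) (by omega)
        (fun h => hvW (mem_nbhd.mpr ⟨_, mem_image_of_mem _ hk, h⟩)) hz
    by_cases hzO : z ∈ O
    · exact mem_union_left _ (mem_sdiff.mpr ⟨hzO, hzW⟩)
    obtain ⟨u, hu, hzu⟩ := mem_nbhd.mp hz
    rcases exists_getVert_of_mem_support_detour h₁ h₂ hj (List.mem_toFinset.mp hu)
      with rfl | ⟨k, -, -, rfl⟩
    · have huO : u ∈ O := mem_nbhd.mpr ⟨p.getVert i,
        List.mem_toFinset.mpr (p.getVert_mem_support i), mem_nbhd_singleton.mpr (Or.inr h₁)⟩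
      have huz := (mem_nbhd_singleton.mp hzu).resolve_left fun h => hzO (h ▸ huO)
      exact mem_union_right _
        (mem_erase.mpr ⟨fun h => hzO (h ▸ hpO), (G.mem_neighborFinset _ z).mpr huz⟩)
    · exact absurd (mem_nbhd.mpr ⟨_, List.mem_toFinset.mpr (p.getVert_mem_support k), hzu⟩) hzO
  refine (hopt _ (isPath_detour h₁ h₂ hp hvp (by omega) hj)).not_gt ?_
  refine card_lt_of_subset_sdiff_union_erase hcover hWO (by simpa using h₁.symm) ?_
  rw [hWcard, card_neighborFinset_eq_degree]
  exact G.degree_le_maxDegree v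

end SimpleGraph.Walk

theorem diff_suffix_of_optimal_path_general {V : Type*} [Fintype V] [DecidableEq V]
    (G : SimpleGraph V) [DecidableRel G.Adj]
    {s m t' : V} (p1 : G.Walk s m) (p2 : G.Walk m t')
    (hp : (p1.append p2).IsPath)
    (hopt : ∀ q : G.Walk s t', q.IsPath → wcost G (p1.append p2) ≤ wcost G q)
    (hshortcutfree : ∀ u v : V, u ∈ (p1.append p2).support → v ∈ (p1.append p2).support →
      G.Adj u v → (p1.append p2).toSubgraph.Adj u v) :
    ((nbhd G p2.support.toFinset) \ (nbhd G p1.support.toFinset)).card =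
      ((nbhd G p2.support.toFinset) \
        (nbhd G (p1.support.drop (p1.support.length - (G.maxDegree + 2))).toFinset)).card := by
  set L := p1.support.length - (G.maxDegree + 2)
  suffices key : ∀ v ∈ nbhd G p2.support.toFinset, v ∈ nbhd G p1.support.toFinset →
      v ∈ nbhd G (p1.support.drop L).toFinset by
    have hσ : (p1.support.drop L).toFinset ⊆ p1.support.toFinset := fun x hx =>
      List.mem_toFinset.mpr (List.mem_of_mem_drop (List.mem_toFinset.mp hx))
    congr 1
    ext v
    simp only [mem_sdiff]
    exact ⟨fun h => ⟨h.1, fun hv => h.2 (nbhd_mono hσ hv)⟩,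
      fun h => ⟨h.1, fun hv => h.2 (key v h.1 hv)⟩⟩
  intro v hv2 hv1
  have hsuffix {k : ℕ} (hLk : L ≤ k) (hk : k ≤ p1.length)
      (hv : v ∈ nbhd G {(p1.append p2).getVert k}) : v ∈ nbhd G (p1.support.drop L).toFinset :=
    mem_nbhd.mpr ⟨_, List.mem_toFinset.mpr (p1.getVert_append_mem_support_drop p2 hLk hk), hv⟩
  obtain ⟨y, hy, hvy⟩ := mem_nbhd.mp hv1
  obtain ⟨x, hx, hvx⟩ := mem_nbhd.mp hv2
  obtain ⟨i, hi, rfl⟩ :=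
    p1.exists_getVert_append_of_mem_support_left p2 (List.mem_toFinset.mp hy)
  obtain ⟨j, hj1, hj, rfl⟩ :=
    p1.exists_getVert_append_of_mem_support_right p2 (List.mem_toFinset.mp hx)
  have hlen : p1.support.length = p1.length + 1 := p1.length_support
  by_cases hiσ : L ≤ i
  · exact hsuffix hiσ hi hvy
  by_cases hjσ : j = p1.length
  · exact hsuffix (by omega) hjσ.le hvx
  -- `L ≥ 1` here, so the window `[L + 1, L + Δ]` is `σ` without its two end vertices.
  obtain ⟨w, hw, hvw⟩ := mem_nbhd.mp <| SimpleGraph.Walk.ShortcutFree.mem_nbhd_image_getVert_Ico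
    hshortcutfree hp hopt (a := L + 1) (by omega) (by omega) hj hvy hvx
  obtain ⟨k, hk, rfl⟩ := mem_image.mp hw
  have := mem_Ico.mp hk
  exact hsuffix (by omega) (by omega) hvw

/-- Let `P* = P₁ ∘ P₂` be an optimal (minimum-cost, shortcut-free) `s–t'` secluded path
in a graph of maximum degree `Δ` with `P₁` having at least `Δ + 2` vertices, and let `σ`
be the `(Δ+2)`-vertex suffix of `P₁`.  Then `Δ(P₂, P₁) = Δ(P₂, σ)`. -/
theorem diff_suffix_of_optimal_path {V : Type*} [Fintype V] [DecidableEq V]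
    (G : SimpleGraph V) [DecidableRel G.Adj]
    {s m t' : V} (p1 : G.Walk s m) (p2 : G.Walk m t')
    (hp : (p1.append p2).IsPath)
    (hopt : ∀ q : G.Walk s t', q.IsPath → wcost G (p1.append p2) ≤ wcost G q)
    (hshortcutfree : ∀ u v : V, u ∈ (p1.append p2).support → v ∈ (p1.append p2).support →
      G.Adj u v → (p1.append p2).toSubgraph.Adj u v)
    (hlen : G.maxDegree + 2 ≤ p1.support.length) :
    ((nbhd G p2.support.toFinset) \ (nbhd G p1.support.toFinset)).card =
      ((nbhd G p2.support.toFinset) \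
        (nbhd G (p1.support.drop (p1.support.length - (G.maxDegree + 2))).toFinset)).card :=
  diff_suffix_of_optimal_path_general G p1 p2 hp hopt hshortcutfree
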